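/- arXiv:1201.6440 — 3 statements merged into one kernel-verified Lean document; each statement's English description precedes it below -/
import Mathlib

section
/- Assume n ≥ 7 and 3n − 2 ≤ N ≤ 4n − 6, and let F = (f, φ, g) satisfy the normalization (2.3) with κ₀ = 2 together with all the stated hypotheses. Then for every multi-index α in the z-variables with |α| = 1, the constant vector D_z^α Φ₁^{(1,2)} lies in the complex linear span of ê₁ and ê₂ in ℂ^{#S₁}. -/
open scoped BigOperators
open Complex

noncomputable section

/-- The domain `ℂ^{n-1} × ℂ` of maps defined near `0` (Siegel coordinates). -/
abbrev Dmn (n : ℕ) := (Fin (n-1) → ℂ) × ℂ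

/-- The weighted-expansion coefficient `H^{(k,j)}(z)`: the homogeneous part of degree `k`
in `z` of the coefficient of `w^j` in the Taylor expansion of `H` at `0`. -/
noncomputable def coeffKJ {n : ℕ} (H : Dmn n → ℂ) (k j : ℕ) (z : Fin (n-1) → ℂ) : ℂ :=
  (1 / ((Nat.factorial k : ℂ) * (Nat.factorial j : ℂ))) *
    iteratedDeriv k (fun t : ℂ => iteratedDeriv j (fun s : ℂ => H (t • z, s)) 0) 0

/-- `H = O_wt(s)`: all Taylor terms of `H` at `0` have weighted degree at least `s`. -/
def Owt {n : ℕ} (s : ℕ) (H : Dmn n → ℂ) : Prop :=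
  ∀ k j : ℕ, k + 2*j < s → ∀ z, coeffKJ H k j z = 0

/-- The index set `S₀ = {(j,l) : 1 ≤ j ≤ κ₀, j ≤ l ≤ n-1}` (in 0-based indexing). -/
abbrev S0 (n κ : ℕ) := {p : Fin κ × Fin (n-1) // p.1.val ≤ p.2.val}

/-- The constants `μ_{jl}`. -/
noncomputable def muJL {n κ : ℕ} (μ : Fin κ → ℝ) (p : S0 n κ) : ℝ :=
  if h : p.val.1.val < p.val.2.val ∧ p.val.2.val < κ then
    Real.sqrt (μ p.val.1 + μ ⟨p.val.2.val, h.2⟩)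
  else Real.sqrt (μ p.val.1)

/-- The normalization (2.3) of Huang–Ji–Xu for a map `F = (f, (Φ₀, Φ₁), g)` of geometric
rank `κ`, with `#S₁ = m = N - n - #S₀`. -/
structure Normalization23 (n N κ m : ℕ) (μ : Fin κ → ℝ)
    (f : Fin (n-1) → Dmn n → ℂ) (Φ₀ : S0 n κ → Dmn n → ℂ)
    (Φ₁ : Fin m → Dmn n → ℂ) (g : Dmn n → ℂ) where
  hn : 3 ≤ n
  hκ1 : 1 ≤ κ
  hκn : κ ≤ n - 2
  hκn1 : κ ≤ n - 1
  hm : n + Fintype.card (S0 n κ) + m = N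
  μpos : ∀ j, 0 < μ j
  U : Set (Dmn n)
  hU : U ∈ nhds (0 : Dmn n)
  hf_diff : ∀ l, DifferentiableOn ℂ (f l) U
  hΦ₀_diff : ∀ p, DifferentiableOn ℂ (Φ₀ p) U
  hΦ₁_diff : ∀ i, DifferentiableOn ℂ (Φ₁ i) U
  hg_diff : DifferentiableOn ℂ g U
  hf0 : ∀ l, f l 0 = 0
  hΦ₀0 : ∀ p, Φ₀ p 0 = 0
  hΦ₁0 : ∀ i, Φ₁ i 0 = 0
  hg0 : g 0 = 0
  /-- the basic (Chern–Moser) equation `Im g = |f|² + |φ|²` on `Im w = |z|²` -/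
  basic : ∀ q ∈ U, q.2.im = ∑ j, Complex.normSq (q.1 j) →
    (g q).im = (∑ l, Complex.normSq (f l q)) +
      ((∑ p : S0 n κ, Complex.normSq (Φ₀ p q)) + ∑ i, Complex.normSq (Φ₁ i q))
  hgw : ∀ q ∈ U, g q = q.2
  hf_tail : ∀ l : Fin (n-1), κ ≤ l.val → ∀ q ∈ U, f l q = q.1 l
  fstar : Fin (n-1) → Fin κ → Dmn n → ℂ
  hf_head : ∀ l : Fin (n-1), l.val < κ → ∀ q ∈ U,
    f l q = ∑ j : Fin κ, q.1 (Fin.castLE hκn1 j) * fstar l j q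
  bcoef : Fin (n-1) → Fin κ → Fin (n-1) → ℂ
  hfstar : ∀ (l : Fin (n-1)) (hl : l.val < κ) (j : Fin κ),
    Owt 4 (fun q => fstar l j q -
      ((if l.val = j.val then (1:ℂ) else 0)
        + (Complex.I/2) * (if l.val = j.val then (1:ℂ) else 0) * ((μ ⟨l.val, hl⟩ : ℝ) : ℂ) * q.2
        + (∑ mm, bcoef l j mm * q.1 mm) * q.2))
  φstar0 : S0 n κ → Fin κ → Dmn n → ℂ
  hφstar0 : ∀ p j, Owt 2 (φstar0 p j)
  hΦ₀eq : ∀ p : S0 n κ, ∀ q ∈ U,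
    Φ₀ p q = ((muJL μ p : ℝ) : ℂ) * q.1 (Fin.castLE hκn1 p.val.1) * q.1 p.val.2
      + ∑ j : Fin κ, q.1 (Fin.castLE hκn1 j) * φstar0 p j q
  φstar1 : Fin m → Fin κ → Dmn n → ℂ
  hφstar1 : ∀ i j, Owt 2 (φstar1 i j)
  hΦ₁eq : ∀ i, ∀ q ∈ U, Φ₁ i q = ∑ j : Fin κ, q.1 (Fin.castLE hκn1 j) * φstar1 i j q
  hΦ₁3 : ∀ i, Owt 3 (Φ₁ i)

/-- The vectors `e_j` with `Φ₀^{(1,1)}(z) = Σ_j e_j z_j`. -/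
noncomputable def eVec {n κ : ℕ} (h : κ ≤ n - 1) (Φ₀ : S0 n κ → Dmn n → ℂ)
    (j : Fin κ) (p : S0 n κ) : ℂ :=
  coeffKJ (Φ₀ p) 1 1 (Pi.single (Fin.castLE h j) 1)

/-- The vectors `ê_j` with `Φ₁^{(1,1)}(z) = Σ_j ê_j z_j`. -/
noncomputable def eHat {n κ m : ℕ} (h : κ ≤ n - 1) (Φ₁ : Fin m → Dmn n → ℂ)
    (j : Fin κ) (i : Fin m) : ℂ :=
  coeffKJ (Φ₁ i) 1 1 (Pi.single (Fin.castLE h j) 1)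

/-- `ξ_j(z) = Φ₀^{(2,0)}(z) · conj(e_j)`. -/
noncomputable def xiF {n κ : ℕ} (h : κ ≤ n - 1) (Φ₀ : S0 n κ → Dmn n → ℂ)
    (j : Fin κ) (z : Fin (n-1) → ℂ) : ℂ :=
  ∑ p : S0 n κ, coeffKJ (Φ₀ p) 2 0 z * (starRingEnd ℂ) (eVec h Φ₀ j p)

/-- `η_j^*(z) = φ^{(3,0)}(z) · conj(e_j^*)` (with `e_j^* = (e_j, ê_j)`). -/
noncomputable def etaStar {n κ m : ℕ} (h : κ ≤ n - 1) (Φ₀ : S0 n κ → Dmn n → ℂ)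
    (Φ₁ : Fin m → Dmn n → ℂ) (j : Fin κ) (z : Fin (n-1) → ℂ) : ℂ :=
  (∑ p : S0 n κ, coeffKJ (Φ₀ p) 3 0 z * (starRingEnd ℂ) (eVec h Φ₀ j p)) +
    ∑ i, coeffKJ (Φ₁ i) 3 0 z * (starRingEnd ℂ) (eHat h Φ₁ j i)

end

noncomputable section

/-- Siegel upper half-space `{(z,w) : Im w > |z|²}` with `z`-coordinates indexed by `ι`. -/
def SiegelSet (ι : Type*) [Fintype ι] : Set ((ι → ℂ) × ℂ) :=
  {q | ∑ i, Complex.normSq (q.1 i) < q.2.im}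

/-- `h` is a quotient of two polynomials on `D`. -/
def IsRatComp {ι : Type*} [Fintype ι] (D : Set ((ι → ℂ) × ℂ)) (h : ((ι → ℂ) × ℂ) → ℂ) : Prop :=
  ∃ P Q : MvPolynomial (ι ⊕ Unit) ℂ,
    ∀ q ∈ D, MvPolynomial.eval (Sum.elim q.1 fun _ => q.2) Q ≠ 0 ∧
      MvPolynomial.eval (Sum.elim q.1 fun _ => q.2) Q * h q =
        MvPolynomial.eval (Sum.elim q.1 fun _ => q.2) P

/-- Index type for the `z`-part of the target `ℂ^{N-1} × ℂ`: the `f`-block, the `Φ₀`-block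
and the `Φ₁`-block. -/
abbrev ZIdx (n κ m : ℕ) := Fin (n-1) ⊕ (S0 n κ ⊕ Fin m)

/-- The full map `F = (f, Φ₀, Φ₁, g)` assembled. -/
noncomputable def Fmap {n κ m : ℕ} (f : Fin (n-1) → Dmn n → ℂ) (Φ₀ : S0 n κ → Dmn n → ℂ)
    (Φ₁ : Fin m → Dmn n → ℂ) (g : Dmn n → ℂ) (q : Dmn n) : (ZIdx n κ m → ℂ) × ℂ :=
  (Sum.elim (fun l => f l q) (Sum.elim (fun p => Φ₀ p q) (fun i => Φ₁ i q)), g q)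

/-- The point of the affine subspace `L_ε` with free coordinates `(z₃,…,z_{n-1}, w)`
taken from `t`. -/
def Lpt (n : ℕ) (a b : (ℂ × ℂ) → Fin (n-1) → ℂ) (aw bw : (ℂ × ℂ) → ℂ)
    (ε : ℂ × ℂ) (t : Dmn n) : Dmn n :=
  (fun l => if l.val = 0 then
      (∑ mm : Fin (n-1), if 2 ≤ mm.val then a ε mm * t.1 mm else 0) + aw ε * t.2 + ε.1
    else if l.val = 1 then
      (∑ mm : Fin (n-1), if 2 ≤ mm.val then b ε mm * t.1 mm else 0) + bw ε * t.2 + ε.2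
    else t.1 l, t.2)

/-- There is a holomorphic family `L_ε` of codimension-two affine subspaces
(through the points `(ε, 0)`, with coefficients vanishing at `ε = 0`) on which every
component of `F = (f, Φ₀, Φ₁, g)` restricts to an affine-linear map. -/
def LinearOnSlices {n κ m : ℕ} (f : Fin (n-1) → Dmn n → ℂ) (Φ₀ : S0 n κ → Dmn n → ℂ)
    (Φ₁ : Fin m → Dmn n → ℂ) (g : Dmn n → ℂ) : Prop :=
  ∃ V ∈ nhds (0 : ℂ × ℂ), ∃ a b : (ℂ × ℂ) → Fin (n-1) → ℂ, ∃ aw bw : (ℂ × ℂ) → ℂ,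
    (∀ l, DifferentiableOn ℂ (fun ε => a ε l) V) ∧
    (∀ l, DifferentiableOn ℂ (fun ε => b ε l) V) ∧
    DifferentiableOn ℂ aw V ∧ DifferentiableOn ℂ bw V ∧
    a 0 = 0 ∧ b 0 = 0 ∧ aw 0 = 0 ∧ bw 0 = 0 ∧
    ∀ ε ∈ V, ∀ h : Dmn n → ℂ,
      h ∈ Set.range f ∪ Set.range Φ₀ ∪ Set.range Φ₁ ∪ {g} →
      ∃ (c₀ : ℂ) (cz : Fin (n-1) → ℂ) (cw : ℂ),
        ∀ t : Dmn n, Lpt n a b aw bw ε t ∈ SiegelSet (Fin (n-1)) →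
          h (Lpt n a b aw bw ε t) = c₀ + (∑ l, cz l * t.1 l) + cw * t.2

end

/-!
Near `0` every component `H` of `Φ₁` agrees with a rational, hence analytic, function. The
slice `L_ε` contains the line `w ↦ x(ε) + w • v(ε)` with `x(ε) = (ε, 0)` and
`v(ε) = (a_n(ε), b_n(ε), 0, …, 0, 1)`. This line meets the Siegel domain in an open set on
which `H` is affine, so by the identity theorem `H` is affine on the whole line near `0`, and
`D²H(x(ε))[v(ε), v(ε)] = 0` for all small `ε`. Differentiating at `ε = 0` in a direction `p`
and using the symmetry of `D²H(0)` gives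
`D³H(0)[(p, 0), e_w, e_w] + 2 D²H(0)[(∂_p a_n, ∂_p b_n, 0, …, 0), e_w] = 0`, that is,
`∂_p H^{(1,2)} = -(∂_p a_n) H^{(1,1)}(e₁) - (∂_p b_n) H^{(1,1)}(e₂)`, with coefficients that do
not depend on the component. For `r ≥ 3` the normalization `Φ₁ = z₁ φ*₁ + z₂ φ*₂` makes `Φ₁`
vanish on the `(z_r, w)`-plane, so `∂_r Φ₁^{(1,2)} = 0`.
-/

open Metric Filter Topology
open scoped ContDiff

section LineDerivatives

variable {E F : Type*} [NormedAddCommGroup E] [NormedSpace ℂ E]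
  [NormedAddCommGroup F] [NormedSpace ℂ F]

theorem HasFDerivAt.comp_line {G : E → F} {G' : E →L[ℂ] F} {x v : E} {s₀ : ℂ}
    (h : HasFDerivAt G G' (x + s₀ • v)) :
    HasDerivAt (fun s : ℂ => G (x + s • v)) (G' v) s₀ := by
  have hline : HasDerivAt (fun s : ℂ => x + s • v) v s₀ := by
    simpa using ((hasDerivAt_id s₀).smul_const v).const_add x
  exact h.comp_hasDerivAt s₀ hline

theorem DifferentiableAt.hasDerivAt_comp_smul {G : E → F} (h : DifferentiableAt ℂ G 0) (v : E) :
    HasDerivAt (fun s : ℂ => G (s • v)) (fderiv ℂ G 0 v) 0 := by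
  simpa using HasFDerivAt.comp_line (x := 0) (v := v) (s₀ := 0) (by simpa using h.hasFDerivAt)

theorem DifferentiableAt.deriv_comp_line {G : E → F} {x v : E} (h : DifferentiableAt ℂ G x) :
    deriv (fun s : ℂ => G (x + s • v)) 0 = fderiv ℂ G x v := by
  simpa using (HasFDerivAt.comp_line (s₀ := 0) (v := v) (by simpa using h.hasFDerivAt)).deriv

theorem Filter.Eventually.comp_line {p : E → Prop} {x : E} (h : ∀ᶠ y in 𝓝 x, p y) (v : E) :
    ∀ᶠ s in 𝓝 (0 : ℂ), p (x + s • v) := by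
  have hc : Tendsto (fun s : ℂ => x + s • v) (𝓝 0) (𝓝 x) := by
    simpa using (Continuous.tendsto (by fun_prop : Continuous fun s : ℂ => x + s • v) 0)
  exact hc.eventually h

theorem Convex.preimage_line {S : Set E} (hS : Convex ℝ S) (x v : E) :
    Convex ℝ {w : ℂ | x + w • v ∈ S} :=
  (hS.translate_preimage_right x).linear_preimage
    ((LinearMap.toSpanSingleton ℂ E v).restrictScalars ℝ)

variable {H : E → ℂ} {x v : E}

theorem AnalyticAt.deriv_comp_line_eventuallyEq (hH : AnalyticAt ℂ H x) :
    deriv (fun s : ℂ => H (x + s • v)) =ᶠ[𝓝 0] fun s => fderiv ℂ H (x + s • v) v := by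
  filter_upwards [hH.eventually_analyticAt.comp_line v] with s hs
  exact hs.differentiableAt.hasFDerivAt.comp_line.deriv

theorem AnalyticAt.iteratedDeriv_two_comp_line (hH : AnalyticAt ℂ H x) :
    iteratedDeriv 2 (fun s : ℂ => H (x + s • v)) 0 = fderiv ℂ (fderiv ℂ H) x v v := by
  have hD : HasFDerivAt (fderiv ℂ H) (fderiv ℂ (fderiv ℂ H) x) (x + (0 : ℂ) • v) := by
    simpa using hH.fderiv.differentiableAt.hasFDerivAt
  rw [iteratedDeriv_succ, iteratedDeriv_one, hH.deriv_comp_line_eventuallyEq.deriv_eq]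
  exact (hD.comp_line.clm_apply (hasDerivAt_const _ v)).deriv.trans (by simp)

theorem AnalyticOnNhd.fderiv_fderiv_apply_eq_zero_of_eventually_affine {S : Set E}
    (hH : AnalyticOnNhd ℂ H S) (hS : IsOpen S) (hSc : Convex ℝ S) (hx : x ∈ S) {w₀ c₀ c : ℂ}
    (hw₀ : x + w₀ • v ∈ S) (haff : ∀ᶠ w in 𝓝 w₀, H (x + w • v) = c₀ + c * w) :
    fderiv ℂ (fderiv ℂ H) x v v = 0 := by
  have hT : IsOpen {w : ℂ | x + w • v ∈ S} := hS.preimage (by fun_prop)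
  have hg : AnalyticOnNhd ℂ (fun w : ℂ => H (x + w • v) - (c₀ + c * w))
      {w : ℂ | x + w • v ∈ S} :=
    fun w hw => (AnalyticAt.comp (f := fun w : ℂ => x + w • v) (hH _ hw) (by fun_prop)).sub
      (by fun_prop)
  have hzero := hg.eqOn_zero_of_preconnected_of_eventuallyEq_zero
    (hSc.preimage_line x v).isPreconnected hw₀ (by filter_upwards [haff] with w hw; simp [hw])
  have hnear : (fun w : ℂ => H (x + w • v)) =ᶠ[𝓝 0] fun w => c₀ + c * w := by
    filter_upwards [hT.mem_nhds (by simpa using hx)] with w hw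
    exact sub_eq_zero.mp (hzero hw)
  rw [← (hH x hx).iteratedDeriv_two_comp_line, hnear.iteratedDeriv_eq]
  simp [iteratedDeriv_succ]

theorem AnalyticOnNhd.eventually_fderiv_fderiv_eq_zero_of_affine_on_open {P : Type*}
    [TopologicalSpace P] {ε₀ : P} {X V : P → E} (hX : ContinuousAt X ε₀) (hV : ContinuousAt V ε₀)
    {S Ω : Set E} (hH : AnalyticOnNhd ℂ H S) (hS : IsOpen S) (hSc : Convex ℝ S) (hΩ : IsOpen Ω)
    (hXS : X ε₀ ∈ S) {w₀ : ℂ} (hw₀ : X ε₀ + w₀ • V ε₀ ∈ S ∩ Ω)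
    (haff : ∀ᶠ ε in 𝓝 ε₀, ∃ c₀ c : ℂ, ∀ w : ℂ,
      X ε + w • V ε ∈ Ω → H (X ε + w • V ε) = c₀ + c * w) :
    ∀ᶠ ε in 𝓝 ε₀, fderiv ℂ (fderiv ℂ H) (X ε) (V ε) (V ε) = 0 := by
  have hpt : ContinuousAt (fun ε => X ε + w₀ • V ε) ε₀ := hX.add (hV.const_smul w₀)
  filter_upwards [haff, hX.eventually_mem (hS.mem_nhds hXS),
    hpt.eventually_mem ((hS.inter hΩ).mem_nhds hw₀)] with ε ⟨c₀, c, hc⟩ hXε hε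
  refine hH.fderiv_fderiv_apply_eq_zero_of_eventually_affine hS hSc hXε hε.1 (c₀ := c₀) (c := c) ?_
  have hline : Continuous fun w : ℂ => X ε + w • V ε := by fun_prop
  filter_upwards [hline.continuousAt.eventually_mem (hΩ.mem_nhds hε.2)] with w hw using hc w hw

theorem AnalyticAt.fderiv_fderiv_fderiv_add_two_mul_eq_zero (hH : AnalyticAt ℂ H x)
    {u v₁ : E} {V : ℂ → E} (hV : HasDerivAt V v₁ 0)
    (h : ∀ᶠ σ in 𝓝 0, fderiv ℂ (fderiv ℂ H) (x + σ • u) (V σ) (V σ) = 0) :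
    fderiv ℂ (fderiv ℂ (fderiv ℂ H)) x u (V 0) (V 0)
      + 2 * fderiv ℂ (fderiv ℂ H) x v₁ (V 0) = 0 := by
  have hD : HasFDerivAt (fderiv ℂ (fderiv ℂ H)) (fderiv ℂ (fderiv ℂ (fderiv ℂ H)) x)
      (x + (0 : ℂ) • u) := by
    simpa using hH.fderiv.fderiv.differentiableAt.hasFDerivAt
  have hline : HasDerivAt (fun σ : ℂ => fderiv ℂ (fderiv ℂ H) (x + σ • u))
      (fderiv ℂ (fderiv ℂ (fderiv ℂ H)) x u) 0 :=
    HasFDerivAt.comp_line (F := E →L[ℂ] E →L[ℂ] ℂ) hD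
  have hcurve := (hline.clm_apply hV).clm_apply hV
  have hsymm := (hH.contDiffAt (n := ω)).isSymmSndFDerivAt_of_omega (V 0) v₁
  have hzero : deriv (fun σ : ℂ => fderiv ℂ (fderiv ℂ H) (x + σ • u) (V σ) (V σ)) 0 = 0 := by
    rw [Filter.EventuallyEq.deriv_eq h, deriv_const]
  rw [hcurve.deriv] at hzero
  simp only [zero_smul, add_zero, add_apply] at hzero
  rw [hsymm] at hzero
  linear_combination hzero

end LineDerivatives

theorem isOpen_siegelSet (ι : Type*) [Fintype ι] : IsOpen (SiegelSet ι) :=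
  isOpen_lt (by fun_prop) (by fun_prop)

theorem IsRatComp.analyticAt {ι : Type*} [Fintype ι] {D : Set ((ι → ℂ) × ℂ)}
    {h : (ι → ℂ) × ℂ → ℂ} (hh : IsRatComp D h) {x : (ι → ℂ) × ℂ} (hD : D ∈ 𝓝 x) :
    AnalyticAt ℂ h x := by
  obtain ⟨P, Q, hPQ⟩ := hh
  have hev : ∀ S : MvPolynomial (ι ⊕ Unit) ℂ,
      AnalyticAt ℂ (fun q : (ι → ℂ) × ℂ => MvPolynomial.eval (Sum.elim q.1 fun _ => q.2) S) x :=
    fun S => AnalyticAt.aeval_mvPolynomial (by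
      rintro (i | u)
      · exact ((ContinuousLinearMap.proj i).comp (ContinuousLinearMap.fst ℂ _ ℂ)).analyticAt x
      · exact analyticAt_snd) S
  refine ((hev P).div (hev Q) (hPQ x (mem_of_mem_nhds hD)).1).congr ?_
  filter_upwards [hD] with q hq
  exact (eq_div_of_mul_eq (hPQ q hq).1 ((mul_comm _ _).trans (hPQ q hq).2)).symm

section WeightedCoefficients

variable {n : ℕ} {H : Dmn n → ℂ}

theorem Dmn.mk_eq_smul_add_smul (t s : ℂ) (z : Fin (n-1) → ℂ) :
    ((t • z, s) : Dmn n) = t • ((z, 0) : Dmn n) + s • ((0, 1) : Dmn n) := by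
  simp

theorem coeffKJ_one_one (hH : AnalyticAt ℂ H 0) (z : Fin (n-1) → ℂ) :
    coeffKJ H 1 1 z = fderiv ℂ (fderiv ℂ H) 0 ((z, 0) : Dmn n) ((0, 1) : Dmn n) := by
  have hinner : (fun t : ℂ => iteratedDeriv 1 (fun s : ℂ => H (t • z, s)) 0)
      =ᶠ[𝓝 0] fun t => fderiv ℂ H (t • ((z, 0) : Dmn n)) ((0, 1) : Dmn n) := by
    filter_upwards [hH.eventually_analyticAt.comp_line ((z, 0) : Dmn n)] with t ht
    rw [zero_add] at ht
    simp_rw [iteratedDeriv_one, Dmn.mk_eq_smul_add_smul]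
    exact ht.differentiableAt.deriv_comp_line
  have houter := (hH.fderiv.differentiableAt.hasDerivAt_comp_smul ((z, 0) : Dmn n)).clm_apply
    (hasDerivAt_const (0 : ℂ) ((0, 1) : Dmn n))
  rw [coeffKJ, iteratedDeriv_one, hinner.deriv_eq, houter.deriv]
  simp

theorem coeffKJ_one_two (hH : AnalyticAt ℂ H 0) (z : Fin (n-1) → ℂ) :
    coeffKJ H 1 2 z =
      2⁻¹ * fderiv ℂ (fderiv ℂ (fderiv ℂ H)) 0 ((z, 0) : Dmn n) ((0, 1) : Dmn n)
        ((0, 1) : Dmn n) := by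
  have hinner : (fun t : ℂ => iteratedDeriv 2 (fun s : ℂ => H (t • z, s)) 0)
      =ᶠ[𝓝 0] fun t =>
        fderiv ℂ (fderiv ℂ H) (t • ((z, 0) : Dmn n)) ((0, 1) : Dmn n) ((0, 1) : Dmn n) := by
    filter_upwards [hH.eventually_analyticAt.comp_line ((z, 0) : Dmn n)] with t ht
    rw [zero_add] at ht
    simp_rw [Dmn.mk_eq_smul_add_smul]
    exact ht.iteratedDeriv_two_comp_line
  have houter :=
    ((hH.fderiv.fderiv.differentiableAt.hasDerivAt_comp_smul ((z, 0) : Dmn n)).clm_apply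
      (hasDerivAt_const (0 : ℂ) ((0, 1) : Dmn n))).clm_apply
        (hasDerivAt_const (0 : ℂ) ((0, 1) : Dmn n))
  rw [coeffKJ, iteratedDeriv_one, hinner.deriv_eq, houter.deriv]
  simp

theorem fderiv_coeffKJ_one_two (hH : AnalyticAt ℂ H 0) (v : Fin (n-1) → ℂ) :
    fderiv ℂ (fun y => coeffKJ H 1 2 y) 0 v = coeffKJ H 1 2 v := by
  let L : (Fin (n-1) → ℂ) →L[ℂ] ℂ := (2⁻¹ : ℂ) •
    ((ContinuousLinearMap.apply ℂ ℂ ((0, 1) : Dmn n)).comp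
      ((ContinuousLinearMap.apply ℂ (Dmn n →L[ℂ] ℂ) ((0, 1) : Dmn n)).comp
        ((fderiv ℂ (fderiv ℂ (fderiv ℂ H)) 0).comp (ContinuousLinearMap.inl ℂ _ ℂ))))
  have hL : (fun y => coeffKJ H 1 2 y) = L := funext fun y => by simp [L, coeffKJ_one_two hH]
  rw [hL, L.fderiv]
  exact (congrFun hL v).symm

theorem coeffKJ_eq_zero_of_eventually {z : Fin (n-1) → ℂ}
    (hz : ∀ᶠ q : ℂ × ℂ in 𝓝 0, H (q.1 • z, q.2) = 0) (k j : ℕ) : coeffKJ H k j z = 0 := by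
  have hinner : (fun t : ℂ => iteratedDeriv j (fun s : ℂ => H (t • z, s)) 0) =ᶠ[𝓝 0] 0 := by
    filter_upwards [Filter.Eventually.curry_nhds (x := (0 : ℂ)) (y := (0 : ℂ)) hz] with t ht
    exact (Filter.EventuallyEq.iteratedDeriv_eq j ht).trans (by simp)
  rw [coeffKJ, hinner.iteratedDeriv_eq]
  simp

theorem Normalization23.coeffKJ_single_eq_zero {N κ m : ℕ} {μ : Fin κ → ℝ}
    {f : Fin (n-1) → Dmn n → ℂ} {Φ₀ : S0 n κ → Dmn n → ℂ} {Φ₁ : Fin m → Dmn n → ℂ}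
    {g : Dmn n → ℂ} (hF : Normalization23 n N κ m μ f Φ₀ Φ₁ g) {r : Fin (n-1)} (hr : κ ≤ r.val)
    (i : Fin m) (k j : ℕ) : coeffKJ (Φ₁ i) k j (Pi.single r 1) = 0 := by
  refine coeffKJ_eq_zero_of_eventually ?_ k j
  have hq : Tendsto (fun q : ℂ × ℂ => ((q.1 • Pi.single r 1, q.2) : Dmn n)) (𝓝 0) (𝓝 0) := by
    have := ((continuous_fst.smul continuous_const).prodMk continuous_snd).tendsto
      (0 : ℂ × ℂ) (f := fun q : ℂ × ℂ => ((q.1 • Pi.single r (1 : ℂ), q.2) : Dmn n))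
    rwa [Prod.fst_zero, Prod.snd_zero, zero_smul, ← Prod.zero_eq_mk] at this
  filter_upwards [hq.eventually hF.hU] with q hqU
  rw [hF.hΦ₁eq i _ hqU]
  refine Finset.sum_eq_zero fun l _ => ?_
  have hlr : Fin.castLE hF.hκn1 l ≠ r := Fin.ne_of_val_ne (by rw [Fin.val_castLE]; omega)
  simp [Pi.single_eq_of_ne hlr]

end WeightedCoefficients

section Slices

variable {n : ℕ}

def planeVec (h : 2 ≤ n - 1) (p : ℂ × ℂ) : Fin (n-1) → ℂ :=
  p.1 • Pi.single (Fin.castLE h 0) 1 + p.2 • Pi.single (Fin.castLE h 1) 1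

theorem planeVec_zero (h : 2 ≤ n - 1) : planeVec (n := n) h 0 = 0 := by
  simp [planeVec]

theorem continuous_planeVec (h : 2 ≤ n - 1) : Continuous (planeVec (n := n) h) := by
  unfold planeVec; fun_prop

theorem exists_planeVec_eq_single (h : 2 ≤ n - 1) {r : Fin (n-1)} (hr : r.val < 2) :
    ∃ p : ℂ × ℂ, planeVec h p = Pi.single r 1 := by
  obtain ⟨r, hr'⟩ := r
  interval_cases r
  · exact ⟨(1, 0), by ext l; simp [planeVec, Pi.single_apply, Fin.ext_iff]⟩
  · exact ⟨(0, 1), by ext l; simp [planeVec, Pi.single_apply, Fin.ext_iff]⟩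

theorem Lpt_zero_left (h : 2 ≤ n - 1) (a b : (ℂ × ℂ) → Fin (n-1) → ℂ) (aw bw : (ℂ × ℂ) → ℂ)
    (ε : ℂ × ℂ) (w : ℂ) :
    Lpt n a b aw bw ε (0, w) =
      ((planeVec h ε, 0) : Dmn n) + w • ((planeVec h (aw ε, bw ε), 1) : Dmn n) := by
  refine Prod.ext (funext fun l => ?_) (by simp [Lpt])
  rcases l with ⟨l, hl⟩
  simp only [Lpt, planeVec, Pi.zero_apply, mul_zero, ite_self, Finset.sum_const_zero, zero_add,
    Prod.fst_add, Prod.smul_fst, Pi.add_apply, Pi.smul_apply, Pi.single_apply, Fin.ext_iff,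
    Fin.val_castLE, smul_eq_mul]
  rcases l with _ | _ | l <;> simp [add_comm, mul_comm]

/-- The slice `L_ε` meets `{z₃ = ⋯ = z_{n-1} = 0}` in the line
`w ↦ (planeVec h ε, 0) + w • (planeVec h (aw ε, bw ε), 1)`. -/
def AffineOnSiegelLines (h : 2 ≤ n - 1) (aw bw : ℂ × ℂ → ℂ) (H : Dmn n → ℂ) : Prop :=
  ∀ᶠ ε in 𝓝 (0 : ℂ × ℂ), ∃ c₀ c : ℂ, ∀ w : ℂ,
    ((planeVec h ε, 0) : Dmn n) + w • ((planeVec h (aw ε, bw ε), 1) : Dmn n) ∈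
        SiegelSet (Fin (n-1)) →
      H (((planeVec h ε, 0) : Dmn n) + w • ((planeVec h (aw ε, bw ε), 1) : Dmn n)) = c₀ + c * w

theorem LinearOnSlices.exists_affineOnSiegelLines {κ m : ℕ} (h : 2 ≤ n - 1)
    {f : Fin (n-1) → Dmn n → ℂ} {Φ₀ : S0 n κ → Dmn n → ℂ} {Φ₁ : Fin m → Dmn n → ℂ}
    {g : Dmn n → ℂ} (hLin : LinearOnSlices f Φ₀ Φ₁ g) :
    ∃ aw bw : ℂ × ℂ → ℂ, DifferentiableAt ℂ aw 0 ∧ DifferentiableAt ℂ bw 0 ∧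
      aw 0 = 0 ∧ bw 0 = 0 ∧ ∀ i, AffineOnSiegelLines h aw bw (Φ₁ i) := by
  obtain ⟨V, hV, a, b, aw, bw, -, -, haw, hbw, -, -, haw0, hbw0, hslice⟩ := hLin
  refine ⟨aw, bw, haw.differentiableAt hV, hbw.differentiableAt hV, haw0, hbw0, fun i => ?_⟩
  filter_upwards [hV] with ε hε
  obtain ⟨c₀, cz, cw, hc⟩ := hslice ε hε (Φ₁ i) (Or.inl (Or.inr ⟨i, rfl⟩))
  refine ⟨c₀, cw, fun w hw => ?_⟩
  rw [← Lpt_zero_left h a b] at hw ⊢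
  simpa using hc (0, w) hw

variable {H : Dmn n → ℂ} {h : 2 ≤ n - 1} {aw bw : ℂ × ℂ → ℂ}

theorem coeffKJ_one_one_planeVec (hH : AnalyticAt ℂ H 0) (p : ℂ × ℂ) :
    coeffKJ H 1 1 (planeVec h p) =
      p.1 * coeffKJ H 1 1 (Pi.single (Fin.castLE h 0) 1)
        + p.2 * coeffKJ H 1 1 (Pi.single (Fin.castLE h 1) 1) := by
  have hsplit : ((planeVec h p, 0) : Dmn n) =
      p.1 • ((Pi.single (Fin.castLE h 0) 1, 0) : Dmn n)
        + p.2 • ((Pi.single (Fin.castLE h 1) 1, 0) : Dmn n) := by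
    simp [planeVec]
  simp only [coeffKJ_one_one hH, hsplit, map_add, map_smul, add_apply, smul_apply, smul_eq_mul]

theorem AffineOnSiegelLines.eventually_fderiv_fderiv_eq_zero
    (hslice : AffineOnSiegelLines h aw bw H) (hH : AnalyticAt ℂ H 0) (haw : ContinuousAt aw 0)
    (hbw : ContinuousAt bw 0) (haw0 : aw 0 = 0) (hbw0 : bw 0 = 0) :
    ∀ᶠ ε in 𝓝 (0 : ℂ × ℂ), fderiv ℂ (fderiv ℂ H) ((planeVec h ε, 0) : Dmn n)
      ((planeVec h (aw ε, bw ε), 1) : Dmn n) ((planeVec h (aw ε, bw ε), 1) : Dmn n) = 0 := by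
  obtain ⟨ρ, hρ, hHρ⟩ := hH.exists_ball_analyticOnNhd
  have hX : ContinuousAt (fun ε : ℂ × ℂ => ((planeVec h ε, 0) : Dmn n)) 0 :=
    ((continuous_planeVec h).prodMk continuous_const).continuousAt
  have hV : ContinuousAt (fun ε : ℂ × ℂ => ((planeVec h (aw ε, bw ε), 1) : Dmn n)) 0 :=
    ((continuous_planeVec h).continuousAt.comp (haw.prodMk hbw)).prodMk continuousAt_const
  have hw₀ : ((planeVec h 0, 0) : Dmn n)
      + (I * (ρ / 2 : ℝ)) • ((planeVec h (aw 0, bw 0), 1) : Dmn n)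
      ∈ ball (0 : Dmn n) ρ ∩ SiegelSet (Fin (n-1)) := by
    rw [haw0, hbw0, ← Prod.zero_eq_mk, planeVec_zero]
    constructor
    · simpa [Prod.norm_def, abs_of_pos hρ] using half_lt_self hρ
    · simpa [SiegelSet] using half_pos hρ
  exact hHρ.eventually_fderiv_fderiv_eq_zero_of_affine_on_open hX hV isOpen_ball
    (convex_ball (0 : Dmn n) ρ) (isOpen_siegelSet _)
    (by simpa [planeVec_zero] using mem_ball_self (x := (0 : Dmn n)) hρ) hw₀ hslice

theorem AffineOnSiegelLines.coeffKJ_one_two_planeVec (hslice : AffineOnSiegelLines h aw bw H)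
    (hH : AnalyticAt ℂ H 0) (haw : DifferentiableAt ℂ aw 0) (hbw : DifferentiableAt ℂ bw 0)
    (haw0 : aw 0 = 0) (hbw0 : bw 0 = 0) (p : ℂ × ℂ) :
    coeffKJ H 1 2 (planeVec h p) =
      -coeffKJ H 1 1 (planeVec h (fderiv ℂ aw 0 p, fderiv ℂ bw 0 p)) := by
  have hcurve : ∀ᶠ σ in 𝓝 (0 : ℂ), fderiv ℂ (fderiv ℂ H) (0 + σ • ((planeVec h p, 0) : Dmn n))
      ((planeVec h (aw (σ • p), bw (σ • p)), 1) : Dmn n)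
      ((planeVec h (aw (σ • p), bw (σ • p)), 1) : Dmn n) = 0 := by
    have hp : Tendsto (fun σ : ℂ => σ • p) (𝓝 0) (𝓝 0) := by
      simpa using (tendsto_id (x := 𝓝 (0 : ℂ))).smul_const p
    filter_upwards [hp.eventually (hslice.eventually_fderiv_fderiv_eq_zero hH haw.continuousAt
      hbw.continuousAt haw0 hbw0)] with σ hσ
    have hbase : (0 : Dmn n) + σ • ((planeVec h p, 0) : Dmn n) = (planeVec h (σ • p), 0) := by
      simp [planeVec, smul_add, smul_smul]
    rwa [hbase]
  have hVd : HasDerivAt (fun σ : ℂ => ((planeVec h (aw (σ • p), bw (σ • p)), 1) : Dmn n))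
      ((planeVec h (fderiv ℂ aw 0 p, fderiv ℂ bw 0 p), 0) : Dmn n) 0 :=
    (((haw.hasDerivAt_comp_smul p).smul_const _).add
      ((hbw.hasDerivAt_comp_smul p).smul_const _)).prodMk (hasDerivAt_const _ _)
  have key := hH.fderiv_fderiv_fderiv_add_two_mul_eq_zero hVd hcurve
  rw [zero_smul, haw0, hbw0, ← Prod.zero_eq_mk, planeVec_zero] at key
  rw [coeffKJ_one_two hH, coeffKJ_one_one hH]
  linear_combination key / 2

end Slices

theorem theorem41_part3_general (n N m : ℕ)
    (μ : Fin 2 → ℝ)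
    (f : Fin (n-1) → Dmn n → ℂ) (Φ₀ : S0 n 2 → Dmn n → ℂ)
    (Φ₁ : Fin m → Dmn n → ℂ) (g : Dmn n → ℂ)
    (hF : Normalization23 n N 2 m μ f Φ₀ Φ₁ g)
    (hRatΦ₁ : ∀ i, IsRatComp (SiegelSet (Fin (n-1)) ∪ hF.U) (Φ₁ i))
    (hLin : LinearOnSlices f Φ₀ Φ₁ g) :
    ∀ r : Fin (n-1),
      (fun i : Fin m => fderiv ℂ (fun y => coeffKJ (Φ₁ i) 1 2 y) 0 (Pi.single r 1)) ∈
        Submodule.span ℂ {eHat hF.hκn1 Φ₁ 0, eHat hF.hκn1 Φ₁ 1} := by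
  intro r
  have hΦ₁ : ∀ i, AnalyticAt ℂ (Φ₁ i) 0 := fun i =>
    (hRatΦ₁ i).analyticAt (Filter.mem_of_superset hF.hU Set.subset_union_right)
  simp_rw [fderiv_coeffKJ_one_two (hΦ₁ _)]
  rcases lt_or_ge r.val 2 with hr | hr
  · obtain ⟨aw, bw, haw, hbw, haw0, hbw0, hslice⟩ := hLin.exists_affineOnSiegelLines hF.hκn1
    obtain ⟨p, hp⟩ := exists_planeVec_eq_single hF.hκn1 hr
    have hvec : (fun i => coeffKJ (Φ₁ i) 1 2 (planeVec hF.hκn1 p)) =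
        -(fderiv ℂ aw 0 p • eHat hF.hκn1 Φ₁ 0 + fderiv ℂ bw 0 p • eHat hF.hκn1 Φ₁ 1) :=
      funext fun i => by
        rw [(hslice i).coeffKJ_one_two_planeVec (hΦ₁ i) haw hbw haw0 hbw0,
          coeffKJ_one_one_planeVec (hΦ₁ i)]
        simp [eHat]
    rw [← hp, hvec]
    exact neg_mem (add_mem (Submodule.smul_mem _ _ (Submodule.subset_span (by simp)))
      (Submodule.smul_mem _ _ (Submodule.subset_span (by simp))))
  · have hvec : (fun i => coeffKJ (Φ₁ i) 1 2 (Pi.single r 1)) = 0 :=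
      funext fun i => hF.coeffKJ_single_eq_zero hr i 1 2
    rw [hvec]
    exact Submodule.zero_mem _

/-- Theorem 4.1 (3): every first-order partial derivative of
`Φ₁^{(1,2)}` lies in `span{ê₁, ê₂}`. -/
theorem theorem41_part3 (n N m : ℕ) (hn : 7 ≤ n) (hN1 : 3*n ≤ N + 2) (hN2 : N + 6 ≤ 4*n)
    (μ : Fin 2 → ℝ)
    (f : Fin (n-1) → Dmn n → ℂ) (Φ₀ : S0 n 2 → Dmn n → ℂ)
    (Φ₁ : Fin m → Dmn n → ℂ) (g : Dmn n → ℂ)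
    (hF : Normalization23 n N 2 m μ f Φ₀ Φ₁ g)
    (hm0 : 0 < m)
    (hHolo : DifferentiableOn ℂ (Fmap f Φ₀ Φ₁ g) (SiegelSet (Fin (n-1))))
    (hMaps : Set.MapsTo (Fmap f Φ₀ Φ₁ g) (SiegelSet (Fin (n-1))) (SiegelSet (ZIdx n 2 m)))
    (hProper : ∀ K ⊆ SiegelSet (ZIdx n 2 m), IsCompact K →
      IsCompact (SiegelSet (Fin (n-1)) ∩ Fmap f Φ₀ Φ₁ g ⁻¹' K))
    (hRatf : ∀ l, IsRatComp (SiegelSet (Fin (n-1)) ∪ hF.U) (f l))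
    (hRatΦ₀ : ∀ p, IsRatComp (SiegelSet (Fin (n-1)) ∪ hF.U) (Φ₀ p))
    (hRatΦ₁ : ∀ i, IsRatComp (SiegelSet (Fin (n-1)) ∪ hF.U) (Φ₁ i))
    (hRatg : IsRatComp (SiegelSet (Fin (n-1)) ∪ hF.U) g)
    (hLin : LinearOnSlices f Φ₀ Φ₁ g)
    (hΦ₁30 : (∀ z : Fin (n-1) → ℂ,
        coeffKJ (Φ₁ ⟨0, hm0⟩) 3 0 z =
          (2 / ((Real.sqrt (μ 0 + μ 1) : ℝ) : ℂ)) *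
            (((Real.sqrt (μ 0 / μ 1) : ℝ) : ℂ) * z (Fin.castLE hF.hκn1 0) * xiF hF.hκn1 Φ₀ 1 z
              - ((Real.sqrt (μ 1 / μ 0) : ℝ) : ℂ) * z (Fin.castLE hF.hκn1 1) * xiF hF.hκn1 Φ₀ 0 z))
      ∧ ∀ i : Fin m, i ≠ ⟨0, hm0⟩ → ∀ z : Fin (n-1) → ℂ, coeffKJ (Φ₁ i) 3 0 z = 0) :
    ∀ r : Fin (n-1),
      (fun i : Fin m => fderiv ℂ (fun y => coeffKJ (Φ₁ i) 1 2 y) 0 (Pi.single r 1)) ∈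
        Submodule.span ℂ {eHat hF.hκn1 Φ₁ 0, eHat hF.hκn1 Φ₁ 1} :=
  theorem41_part3_general n N m μ f Φ₀ Φ₁ g hF hRatΦ₁ hLin
end

section
/- For h = 1, 2 let Γ_j^{[h]} (1 ≤ j ≤ κ₀) be holomorphic functions of z ∈ ℂ^{n−1}, and define functions Λ_{jl}^{[h]} for (j, l) ∈ S₀ by: μ_{jl} Λ_{jl}^{[h]}(z) = 2i(z_j Γ_l^{[h]}(z) + z_l Γ_j^{[h]}(z)) for j < l ≤ κ₀; μ_{jj} Λ_{jj}^{[h]}(z) = 2i z_j Γ_j^{[h]}(z) for j ≤ κ₀; and μ_{jl} Λ_{jl}^{[h]}(z) = 2i z_l Γ_j^{[h]}(z) for j ≤ κ₀ < l. Then Σ_{(j,l)∈S₀} conj(Λ_{jl}^{[1]}(z)) Λ_{jl}^{[2]}(z) = 4|z|² Σ_{j≤κ₀} (1/μ_j) conj(Γ_j^{[1]}(z)) Γ_j^{[2]}(z) − Σ_{j<l≤κ₀} (4/(μ_j μ_l (μ_j + μ_l))) (μ_j conj(z_j) conj(Γ_l^{[1]}(z)) − μ_l conj(z_l) conj(Γ_j^{[1]}(z)))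 · (μ_j z_j Γ_l^{[2]}(z) − μ_l z_l Γ_j^{[2]}(z)) for all z ∈ ℂ^{n−1}. -/
open scoped BigOperators
open Complex

noncomputable section

/-- The right-hand sides `2i(z_jΓ_l + z_lΓ_j)`, `2iz_jΓ_j`, `2iz_lΓ_j` of the defining
equations in Lemma 3.1, according to the position of `(j,l) ∈ S₀`. -/
noncomputable def lamRHS {n κ : ℕ} (h : κ ≤ n - 1) (Γ : Fin κ → (Fin (n-1) → ℂ) → ℂ)
    (p : S0 n κ) (z : Fin (n-1) → ℂ) : ℂ :=
  if hp : p.val.2.val < κ then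
    if p.val.1.val = p.val.2.val then
      2 * Complex.I * (z (Fin.castLE h p.val.1) * Γ p.val.1 z)
    else
      2 * Complex.I * (z (Fin.castLE h p.val.1) * Γ ⟨p.val.2.val, hp⟩ z
        + z p.val.2 * Γ p.val.1 z)
  else 2 * Complex.I * (z p.val.2 * Γ p.val.1 z)

end

/-!
Since `μ_{jl} Λ_{jl} = lamRHS`, each term of the left side is `conj(lamRHS¹) lamRHS² / μ_{jl}²`,
where `μ_{jl}² = μ_j + μ_l` for `j < l ≤ κ₀` and `μ_{jl}² = μ_j` otherwise. A term with `l = j` or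
`l > κ₀` is then exactly the `(j, l)` term `4 |z_l|² conj(Γ¹_j) Γ²_j / μ_j` of the double sum hidden
in the first term on the right. For `j < l ≤ κ₀` the single term `(j, l)` has to account for both
the `(j, l)` and the `(l, j)` terms of that double sum, and a rational identity in `μ_j, μ_l` shows
that the discrepancy is exactly the `(j, l)` cross term. Summing over the `κ₀ × κ₀` block, with
`(j, l)` paired against `(l, j)`, gives the identity.
-/

open Finset

theorem Fintype.sum_subtype_eq_sum_dite {α M : Type*} [Fintype α] [AddCommMonoid M]
    (p : α → Prop) [DecidablePred p] (f : ∀ a, p a → M) :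
    ∑ a : {a // p a}, f a a.2 = ∑ a, if h : p a then f a h else 0 := by
  rw [Finset.sum_dite, sum_const_zero, add_zero]
  exact Fintype.sum_equiv (Equiv.subtypeEquivRight (by simp)) _ _ fun _ => rfl

theorem Fin.sum_castLE_of_eq_zero {a b : ℕ} {M : Type*} [AddCommMonoid M] (h : a ≤ b)
    (f : Fin b → M) (hf : ∀ l : Fin b, a ≤ l.val → f l = 0) :
    ∑ l : Fin a, f (Fin.castLE h l) = ∑ l, f l := by
  refine (sum_map univ (Fin.castLEEmb h) f).symm.trans ?_
  refine sum_subset (subset_univ _) fun l _ hl => hf l ?_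
  by_contra! hla
  exact hl (mem_map.2 ⟨⟨l, hla⟩, mem_univ _, rfl⟩)

theorem Fintype.sum_sum_eq_zero_of_add_swap_eq_zero {ι M : Type*} [Fintype ι] [AddCommMonoid M]
    [IsAddTorsionFree M] (D : ι → ι → M) (hD : ∀ i j, D i j + D j i = 0) :
    ∑ i, ∑ j, D i j = 0 := by
  apply nsmul_right_injective two_ne_zero
  simp only [two_nsmul, smul_zero]
  nth_rw 2 [sum_comm]
  simp only [← sum_add_distrib, hD, sum_const_zero]

theorem pair_polarization {K : Type*} [Field K] {mj ml : K} (hj : mj ≠ 0) (hl : ml ≠ 0)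
    (hjl : mj + ml ≠ 0) (xj xl zj zl Aj Al Bj Bl : K) :
    4 * ((xj * Al + xl * Aj) * (zj * Bl + zl * Bj)) / (mj + ml) =
      4 * (xl * zl) * (1 / mj * Aj * Bj) + 4 * (xj * zj) * (1 / ml * Al * Bl) -
        4 / (mj * ml * (mj + ml)) *
          ((mj * xj * Al - ml * xl * Aj) * (mj * zj * Bl - ml * zl * Bj)) := by
  field_simp
  ring

theorem conj_mul_eq_div_sq_of_ofReal_mul_eq {c : ℝ} (hc : c ≠ 0) {x y X Y : ℂ}
    (hx : (c : ℂ) * x = X) (hy : (c : ℂ) * y = Y) :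
    starRingEnd ℂ x * y = starRingEnd ℂ X * Y / (c : ℂ) ^ 2 := by
  rw [← hx, ← hy, map_mul, Complex.conj_ofReal]
  field_simp [Complex.ofReal_ne_zero.2 hc]

theorem conj_two_I_mul_mul_two_I_mul (X Y : ℂ) :
    starRingEnd ℂ (2 * Complex.I * X) * (2 * Complex.I * Y) = 4 * (starRingEnd ℂ X * Y) := by
  simp only [map_mul, Complex.conj_I, map_ofNat]
  linear_combination (-4 * starRingEnd ℂ X * Y) * Complex.I_mul_I

section muJL

variable {n κ : ℕ} {μ : Fin κ → ℝ}

theorem muJL_pos (hμ : ∀ j, 0 < μ j) (p : S0 n κ) : 0 < muJL μ p := by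
  unfold muJL
  split_ifs
  exacts [Real.sqrt_pos.2 (add_pos (hμ _) (hμ _)), Real.sqrt_pos.2 (hμ _)]

theorem muJL_sq_of_lt (hμ : ∀ j, 0 < μ j) (h : κ ≤ n - 1) {j l : Fin κ} (hjl : j < l) :
    muJL μ (⟨(j, Fin.castLE h l), hjl.le⟩ : S0 n κ) ^ 2 = μ j + μ l := by
  rw [muJL, dif_pos ⟨hjl, l.isLt⟩, Real.sq_sqrt (add_pos (hμ _) (hμ _)).le]
  rfl

theorem muJL_sq_of_not_lt (hμ : ∀ j, 0 < μ j) {p : S0 n κ}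
    (hp : ¬(p.val.1.val < p.val.2.val ∧ p.val.2.val < κ)) :
    muJL μ p ^ 2 = μ p.val.1 := by
  rw [muJL, dif_neg hp, Real.sq_sqrt (hμ _).le]

end muJL

section lamRHS

variable {n κ : ℕ} (h : κ ≤ n - 1) (Γ : Fin κ → (Fin (n-1) → ℂ) → ℂ) (z : Fin (n-1) → ℂ)

theorem lamRHS_of_le {j : Fin κ} {l : Fin (n-1)} (hl : κ ≤ l.val) (hjl : j.val ≤ l.val) :
    lamRHS h Γ ⟨(j, l), hjl⟩ z = 2 * Complex.I * (z l * Γ j z) := by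
  rw [lamRHS, dif_neg (not_lt.2 hl)]

theorem lamRHS_diag (j : Fin κ) :
    lamRHS h Γ ⟨(j, Fin.castLE h j), le_rfl⟩ z =
      2 * Complex.I * (z (Fin.castLE h j) * Γ j z) := by
  simp [lamRHS]

theorem lamRHS_of_lt {j l : Fin κ} (hjl : j < l) :
    lamRHS h Γ ⟨(j, Fin.castLE h l), hjl.le⟩ z =
      2 * Complex.I * (z (Fin.castLE h j) * Γ l z + z (Fin.castLE h l) * Γ j z) := by
  simp [lamRHS, Fin.val_ne_of_ne hjl.ne]

end lamRHS

section Polarization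

variable {n κ : ℕ} (h : κ ≤ n - 1) (μ : Fin κ → ℝ) (Γ1 Γ2 : Fin κ → (Fin (n-1) → ℂ) → ℂ)
  (z : Fin (n-1) → ℂ)

/-- `conj(Λ¹_{jl}) Λ²_{jl}`, read off from the defining equations and extended by `0`
outside `S₀`. -/
noncomputable def lamPair (j : Fin κ) (l : Fin (n-1)) : ℂ :=
  if hjl : j.val ≤ l.val then
    starRingEnd ℂ (lamRHS h Γ1 ⟨(j, l), hjl⟩ z) * lamRHS h Γ2 ⟨(j, l), hjl⟩ z /
      (muJL μ ⟨(j, l), hjl⟩ : ℂ) ^ 2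
  else 0

noncomputable def normTerm (j : Fin κ) (l : Fin (n-1)) : ℂ :=
  4 * Complex.normSq (z l) * (1 / (μ j : ℂ) * starRingEnd ℂ (Γ1 j z) * Γ2 j z)

noncomputable def crossTerm (j l : Fin κ) : ℂ :=
  if j.val < l.val then
    (4 / ((μ j : ℂ) * (μ l : ℂ) * ((μ j : ℂ) + (μ l : ℂ)))) *
      (((μ j : ℂ) * starRingEnd ℂ (z (Fin.castLE h j)) * starRingEnd ℂ (Γ1 l z)
        - (μ l : ℂ) * starRingEnd ℂ (z (Fin.castLE h l)) * starRingEnd ℂ (Γ1 j z)) *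
       ((μ j : ℂ) * z (Fin.castLE h j) * Γ2 l z - (μ l : ℂ) * z (Fin.castLE h l) * Γ2 j z))
  else 0

variable {μ}

theorem sum_conj_mul_eq_sum_lamPair (hμ : ∀ j, 0 < μ j) (Λ1 Λ2 : S0 n κ → (Fin (n-1) → ℂ) → ℂ)
    (hΛ1 : ∀ p, ((muJL μ p : ℝ) : ℂ) * Λ1 p z = lamRHS h Γ1 p z)
    (hΛ2 : ∀ p, ((muJL μ p : ℝ) : ℂ) * Λ2 p z = lamRHS h Γ2 p z) :
    ∑ p : S0 n κ, starRingEnd ℂ (Λ1 p z) * Λ2 p z = ∑ j, ∑ l, lamPair h μ Γ1 Γ2 z j l := by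
  rw [← Fintype.sum_prod_type' (f := lamPair h μ Γ1 Γ2 z)]
  unfold lamPair
  rw [← Fintype.sum_subtype_eq_sum_dite (fun q : Fin κ × Fin (n-1) => q.1.val ≤ q.2.val)]
  exact sum_congr rfl fun p _ =>
    conj_mul_eq_div_sq_of_ofReal_mul_eq (muJL_pos hμ p).ne' (hΛ1 p) (hΛ2 p)

theorem lamPair_of_le (hμ : ∀ j, 0 < μ j) (j : Fin κ) {l : Fin (n-1)} (hl : κ ≤ l.val) :
    lamPair h μ Γ1 Γ2 z j l = normTerm μ Γ1 Γ2 z j l := by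
  have hjl : j.val ≤ l.val := j.isLt.le.trans hl
  rw [lamPair, dif_pos hjl, lamRHS_of_le h _ _ hl, lamRHS_of_le h _ _ hl,
    conj_two_I_mul_mul_two_I_mul, ← Complex.ofReal_pow,
    muJL_sq_of_not_lt hμ fun hp => (not_lt.2 hl) hp.2,
    normTerm, Complex.normSq_eq_conj_mul_self, map_mul]
  ring

theorem lamPair_diag (hμ : ∀ j, 0 < μ j) (j : Fin κ) :
    lamPair h μ Γ1 Γ2 z j (Fin.castLE h j) = normTerm μ Γ1 Γ2 z j (Fin.castLE h j) := by
  rw [lamPair, dif_pos (show j.val ≤ (Fin.castLE h j).val from le_rfl), lamRHS_diag,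
    lamRHS_diag, conj_two_I_mul_mul_two_I_mul, ← Complex.ofReal_pow,
    muJL_sq_of_not_lt hμ fun hp => (lt_irrefl _) hp.1,
    normTerm, Complex.normSq_eq_conj_mul_self, map_mul]
  ring

theorem lamPair_of_lt (hμ : ∀ j, 0 < μ j) {j l : Fin κ} (hjl : j < l) :
    lamPair h μ Γ1 Γ2 z j (Fin.castLE h l) = normTerm μ Γ1 Γ2 z j (Fin.castLE h l) +
      normTerm μ Γ1 Γ2 z l (Fin.castLE h j) - crossTerm h μ Γ1 Γ2 z j l := by
  have hμ' : ∀ i, (μ i : ℂ) ≠ 0 := fun i => Complex.ofReal_ne_zero.2 (hμ i).ne'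
  have hμμ : (μ j : ℂ) + μ l ≠ 0 := by exact_mod_cast (add_pos (hμ j) (hμ l)).ne'
  rw [lamPair, dif_pos (show j.val ≤ (Fin.castLE h l).val from hjl.le),
    lamRHS_of_lt h _ _ hjl, lamRHS_of_lt h _ _ hjl, conj_two_I_mul_mul_two_I_mul,
    ← Complex.ofReal_pow, muJL_sq_of_lt hμ h hjl, crossTerm,
    if_pos (show j.val < l.val from hjl), normTerm, normTerm, Complex.normSq_eq_conj_mul_self,
    Complex.normSq_eq_conj_mul_self, map_add, map_mul, map_mul]
  push_cast
  exact pair_polarization (hμ' j) (hμ' l) hμμ _ _ _ _ _ _ _ _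

theorem lamPair_of_gt {j l : Fin κ} (hlj : l < j) :
    lamPair h μ Γ1 Γ2 z j (Fin.castLE h l) = 0 :=
  dif_neg (not_le.2 hlj)

theorem sum_lamPair_sub_normTerm_add_crossTerm (hμ : ∀ j, 0 < μ j) :
    ∑ j, ∑ l : Fin κ, (lamPair h μ Γ1 Γ2 z j (Fin.castLE h l)
      - normTerm μ Γ1 Γ2 z j (Fin.castLE h l) + crossTerm h μ Γ1 Γ2 z j l) = 0 := by
  have crossTerm_of_ge {j l : Fin κ} (hlj : l ≤ j) : crossTerm h μ Γ1 Γ2 z j l = 0 :=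
    if_neg (not_lt.2 hlj)
  have pair {j l : Fin κ} (hjl : j < l) :
      (lamPair h μ Γ1 Γ2 z j (Fin.castLE h l) - normTerm μ Γ1 Γ2 z j (Fin.castLE h l)
        + crossTerm h μ Γ1 Γ2 z j l) + (lamPair h μ Γ1 Γ2 z l (Fin.castLE h j)
        - normTerm μ Γ1 Γ2 z l (Fin.castLE h j) + crossTerm h μ Γ1 Γ2 z l j) = 0 := by
    rw [lamPair_of_lt h Γ1 Γ2 z hμ hjl, lamPair_of_gt h Γ1 Γ2 z hjl, crossTerm_of_ge hjl.le]
    ring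
  refine Fintype.sum_sum_eq_zero_of_add_swap_eq_zero _ fun j l => ?_
  rcases lt_trichotomy j l with hjl | rfl | hlj
  · exact pair hjl
  · rw [lamPair_diag h Γ1 Γ2 z hμ, crossTerm_of_ge le_rfl]
    ring
  · rw [add_comm]
    exact pair hlj

theorem sum_sum_normTerm :
    ∑ j, ∑ l, normTerm μ Γ1 Γ2 z j l =
      4 * ((∑ l, Complex.normSq (z l) : ℝ) : ℂ) *
        ∑ j, 1 / (μ j : ℂ) * starRingEnd ℂ (Γ1 j z) * Γ2 j z := by
  push_cast
  simp only [normTerm, mul_sum, sum_mul]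

end Polarization

theorem lemma31_general (n κ : ℕ) (hκn1 : κ ≤ n - 1)
    (μ : Fin κ → ℝ) (hμ : ∀ j, 0 < μ j)
    (Γ1 Γ2 : Fin κ → (Fin (n-1) → ℂ) → ℂ)
    (Λ1 Λ2 : S0 n κ → (Fin (n-1) → ℂ) → ℂ)
    (hΛ1 : ∀ (p : S0 n κ) (z : Fin (n-1) → ℂ),
      ((muJL μ p : ℝ) : ℂ) * Λ1 p z = lamRHS hκn1 Γ1 p z)
    (hΛ2 : ∀ (p : S0 n κ) (z : Fin (n-1) → ℂ),
      ((muJL μ p : ℝ) : ℂ) * Λ2 p z = lamRHS hκn1 Γ2 p z) :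
    ∀ z : Fin (n-1) → ℂ,
      ∑ p : S0 n κ, (starRingEnd ℂ) (Λ1 p z) * Λ2 p z =
        4 * ((∑ jj, Complex.normSq (z jj) : ℝ) : ℂ) *
          (∑ j, (1 / ((μ j : ℝ) : ℂ)) * (starRingEnd ℂ) (Γ1 j z) * Γ2 j z)
        - ∑ j : Fin κ, ∑ l : Fin κ, (if j.val < l.val then
            (4 / (((μ j : ℝ) : ℂ) * ((μ l : ℝ) : ℂ) * (((μ j : ℝ) : ℂ) + ((μ l : ℝ) : ℂ)))) *
              ((((μ j : ℝ) : ℂ) * (starRingEnd ℂ) (z (Fin.castLE hκn1 j)) * (starRingEnd ℂ) (Γ1 l z)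
                - ((μ l : ℝ) : ℂ) * (starRingEnd ℂ) (z (Fin.castLE hκn1 l)) * (starRingEnd ℂ) (Γ1 j z)) *
               (((μ j : ℝ) : ℂ) * z (Fin.castLE hκn1 j) * Γ2 l z
                - ((μ l : ℝ) : ℂ) * z (Fin.castLE hκn1 l) * Γ2 j z))
          else 0) := by
  intro z
  have tail (j : Fin κ) :
      ∑ l : Fin κ, (lamPair hκn1 μ Γ1 Γ2 z j (Fin.castLE hκn1 l)
        - normTerm μ Γ1 Γ2 z j (Fin.castLE hκn1 l)) =
      ∑ l, (lamPair hκn1 μ Γ1 Γ2 z j l - normTerm μ Γ1 Γ2 z j l) :=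
    Fin.sum_castLE_of_eq_zero hκn1 _ fun l hl =>
      sub_eq_zero.2 (lamPair_of_le hκn1 Γ1 Γ2 z hμ j hl)
  have block := sum_lamPair_sub_normTerm_add_crossTerm hκn1 Γ1 Γ2 z hμ
  simp only [sum_add_distrib, tail, sum_sub_distrib] at block
  change _ = _ - ∑ j, ∑ l, crossTerm hκn1 μ Γ1 Γ2 z j l
  rw [sum_conj_mul_eq_sum_lamPair hκn1 Γ1 Γ2 z hμ Λ1 Λ2 (hΛ1 · z) (hΛ2 · z), ← sum_sum_normTerm]
  linear_combination block

/-- Lemma 3.1: the polarization identity for the vectors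
`Λ^{[1]}, Λ^{[2]}` determined by `Γ^{[1]}, Γ^{[2]}`. -/
theorem lemma31 (n κ : ℕ) (hn : 3 ≤ n) (hκ1 : 1 ≤ κ) (hκ2 : κ ≤ n - 2) (hκn1 : κ ≤ n - 1)
    (μ : Fin κ → ℝ) (hμ : ∀ j, 0 < μ j)
    (Γ1 Γ2 : Fin κ → (Fin (n-1) → ℂ) → ℂ)
    (hΓ1 : ∀ j, Differentiable ℂ (Γ1 j)) (hΓ2 : ∀ j, Differentiable ℂ (Γ2 j))
    (Λ1 Λ2 : S0 n κ → (Fin (n-1) → ℂ) → ℂ)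
    (hΛ1 : ∀ (p : S0 n κ) (z : Fin (n-1) → ℂ),
      ((muJL μ p : ℝ) : ℂ) * Λ1 p z = lamRHS hκn1 Γ1 p z)
    (hΛ2 : ∀ (p : S0 n κ) (z : Fin (n-1) → ℂ),
      ((muJL μ p : ℝ) : ℂ) * Λ2 p z = lamRHS hκn1 Γ2 p z) :
    ∀ z : Fin (n-1) → ℂ,
      ∑ p : S0 n κ, (starRingEnd ℂ) (Λ1 p z) * Λ2 p z =
        4 * ((∑ jj, Complex.normSq (z jj) : ℝ) : ℂ) *
          (∑ j, (1 / ((μ j : ℝ) : ℂ)) * (starRingEnd ℂ) (Γ1 j z) * Γ2 j z)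
        - ∑ j : Fin κ, ∑ l : Fin κ, (if j.val < l.val then
            (4 / (((μ j : ℝ) : ℂ) * ((μ l : ℝ) : ℂ) * (((μ j : ℝ) : ℂ) + ((μ l : ℝ) : ℂ)))) *
              ((((μ j : ℝ) : ℂ) * (starRingEnd ℂ) (z (Fin.castLE hκn1 j)) * (starRingEnd ℂ) (Γ1 l z)
                - ((μ l : ℝ) : ℂ) * (starRingEnd ℂ) (z (Fin.castLE hκn1 l)) * (starRingEnd ℂ) (Γ1 j z)) *
               (((μ j : ℝ) : ℂ) * z (Fin.castLE hκn1 j) * Γ2 l z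
                - ((μ l : ℝ) : ℂ) * z (Fin.castLE hκn1 l) * Γ2 j z))
          else 0) :=
  lemma31_general n κ hκn1 μ hμ Γ1 Γ2 Λ1 Λ2 hΛ1 hΛ2
end

section
/- Let n ≥ 2 and λ, μ ∈ (0, 1), and let F : ℂ^n → ℂ^{3n} be the polynomial map F(z) = (z₁, …, z_{n−2}, λ z_{n−1}, z_n, √(1−λ²) z_{n−1}·(z₁, …, z_{n−1}, μ z_n, √(1−μ²) z_n z)), where z = (z₁, …, z_n). Then for all z ∈ ℂ^n, |F(z)|² − 1 = (|z|² − 1)(1 + (1−λ²)|z_{n−1}|²(1 + (1−μ²)|z_n|²)). Consequently |F(z)| < 1 whenever |z| < 1, |F(z)| = 1 whenever |z| = 1, and F restricts to a proper holomorphic map from B^n into B^{3n}. -/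
/-!
Write `S = |z|²`, `a = |z_{n-1}|²`, `b = |z_n|²` and split the `3n` coordinates of `F` into three
blocks of `n` (index `j + n k`, `k < 3`). The blocks contribute `S - (1-λ²)a`,
`(1-λ²)a(S - (1-μ²)b)` and `(1-λ²)(1-μ²)ab S` to `|F(z)|²`, which add up to
`1 + (S - 1)(1 + (1-λ²)a(1 + (1-μ²)b))`; with 0-based indices, `a` and `b` are the squares of
`z ⟨n-2⟩` and `z ⟨n-1⟩`. The weight is positive, so `F` maps the ball into the
ball and the sphere into the sphere. The latter keeps `B^n ∩ F⁻¹ K` away from the sphere when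
`K ⊆ B^{3n}`, so that set is closed in the closed ball, hence compact.
-/

open scoped BigOperators

noncomputable section

/-- The open unit ball `B^n ⊂ ℂ^n`. -/
def ballC (n : ℕ) : Set (Fin n → ℂ) := {z | ∑ j, Complex.normSq (z j) < 1}

/-- The defining property of the degree-three monomial map (1.1):
`F = (z₁,…,z_{n-2}, λ z_{n-1}, z_n, √(1-λ²) z_{n-1}·(z₁,…,z_{n-1}, μ z_n, √(1-μ²) z_n z))`. -/
def IsExampleMap (n : ℕ) (lam mu : ℝ) (F : (Fin n → ℂ) → Fin (3*n) → ℂ) : Prop :=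
  2 ≤ n ∧ ∀ z, ∀ i : Fin (3*n), F z i =
    if _ : i.val < n - 2 then z ⟨i.val, by omega⟩
    else if i.val = n - 2 then (lam : ℂ) * z ⟨n-2, by omega⟩
    else if i.val = n - 1 then z ⟨n-1, by omega⟩
    else if _ : i.val < 2*n - 1 then
      (Real.sqrt (1 - lam^2) : ℂ) * z ⟨n-2, by omega⟩ * z ⟨i.val - n, by omega⟩
    else if i.val = 2*n - 1 then
      (Real.sqrt (1 - lam^2) : ℂ) * z ⟨n-2, by omega⟩ * ((mu : ℂ) * z ⟨n-1, by omega⟩)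
    else (Real.sqrt (1 - lam^2) : ℂ) * z ⟨n-2, by omega⟩ *
      ((Real.sqrt (1 - mu^2) : ℂ) * z ⟨n-1, by omega⟩ * z ⟨i.val - 2*n, by have := i.isLt; omega⟩)

end

open Complex

theorem Fin.sum_univ_three_mul {M : Type*} [AddCommMonoid M] {n : ℕ} (f : Fin (3 * n) → M) :
    ∑ i, f i = ∑ j, f (finProdFinEquiv (0, j)) + ∑ j, f (finProdFinEquiv (1, j)) +
      ∑ j, f (finProdFinEquiv (2, j)) := by
  rw [← finProdFinEquiv.sum_comp, Fintype.sum_prod_type, Fin.sum_univ_three]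

theorem Complex.normSq_ofReal_sqrt {x : ℝ} (hx : 0 ≤ x) : normSq (√x : ℂ) = x := by
  rw [normSq_ofReal, Real.mul_self_sqrt hx]

theorem isCompact_setOf_sum_normSq_le_one (n : ℕ) :
    IsCompact {z : Fin n → ℂ | ∑ j, normSq (z j) ≤ 1} := by
  refine Metric.isCompact_of_isClosed_isBounded
    (isClosed_le (by fun_prop) continuous_const) (isBounded_iff_forall_norm_le.2 ⟨1, ?_⟩)
  intro z hz
  refine (pi_norm_le_iff_of_nonneg zero_le_one).2 fun j => ?_
  have hj : ‖z j‖ ^ 2 ≤ 1 := by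
    rw [Complex.sq_norm]
    exact (Finset.single_le_sum (fun k _ => normSq_nonneg (z k)) (Finset.mem_univ j)).trans hz
  exact (sq_le_one_iff₀ (norm_nonneg _)).1 hj

theorem isCompact_ballC_inter_preimage {m n : ℕ} {F : (Fin n → ℂ) → Fin m → ℂ}
    (hF : Continuous F) (hsphere : ∀ z, ∑ j, normSq (z j) = 1 → ∑ i, normSq (F z i) = 1)
    {K : Set (Fin m → ℂ)} (hKB : K ⊆ ballC m) (hK : IsCompact K) :
    IsCompact (ballC n ∩ F ⁻¹' K) := by
  have hclosed : ballC n ∩ F ⁻¹' K = {z | ∑ j, normSq (z j) ≤ 1} ∩ F ⁻¹' K := by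
    ext z
    simp only [Set.mem_inter_iff, Set.mem_preimage, ballC, Set.mem_ofPred_eq]
    refine and_congr_left fun hFz => ⟨le_of_lt, fun hz => lt_of_le_of_ne hz fun h => ?_⟩
    exact (hKB hFz).ne (hsphere z h)
  rw [hclosed]
  exact (isCompact_setOf_sum_normSq_le_one n).inter_right (hK.isClosed.preimage hF)

namespace IsExampleMap

variable {n : ℕ} {lam mu : ℝ} {F : (Fin n → ℂ) → Fin (3 * n) → ℂ}

theorem differentiable (hF : IsExampleMap n lam mu F) : Differentiable ℂ F := by
  refine differentiable_pi.2 fun i => ?_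
  simp only [hF.2]
  split_ifs <;> fun_prop

variable (hF : IsExampleMap n lam mu F) (z : Fin n → ℂ) {p q : Fin n}
include hF

theorem normSq_apply_block_zero (hp : (p : ℕ) = n - 2) (hq : (q : ℕ) = n - 1) (j : Fin n) :
    normSq (F z (finProdFinEquiv (0, j))) =
      normSq (z j) - if j = p then (1 - lam ^ 2) * normSq (z p) else 0 := by
  obtain ⟨hn, hF⟩ := hF
  have ep : (⟨n - 2, by omega⟩ : Fin n) = p := Fin.ext hp.symm
  have eq : (⟨n - 1, by omega⟩ : Fin n) = q := Fin.ext hq.symm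
  have hj := j.isLt
  rw [hF]
  simp only [ep, eq, finProdFinEquiv_apply_val, Fin.val_zero, mul_zero, add_zero, Fin.ext_iff]
  split_ifs <;> first | omega | skip
  · simp
  · obtain rfl : j = p := Fin.ext (by omega)
    rw [normSq_mul, normSq_ofReal]
    ring
  · obtain rfl : q = j := Fin.ext (by omega)
    simp

theorem normSq_apply_block_one (hlam : lam ^ 2 ≤ 1) (hp : (p : ℕ) = n - 2)
    (hq : (q : ℕ) = n - 1) (j : Fin n) :
    normSq (F z (finProdFinEquiv (1, j))) = (1 - lam ^ 2) * normSq (z p) *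
      (normSq (z j) - if j = q then (1 - mu ^ 2) * normSq (z q) else 0) := by
  obtain ⟨hn, hF⟩ := hF
  have ep : (⟨n - 2, by omega⟩ : Fin n) = p := Fin.ext hp.symm
  have eq : (⟨n - 1, by omega⟩ : Fin n) = q := Fin.ext hq.symm
  have hj := j.isLt
  have hj' : (j : ℕ) + n * 1 - n = j := by omega
  rw [hF]
  simp only [ep, eq, finProdFinEquiv_apply_val, Fin.val_one, hj', Fin.eta, Fin.ext_iff]
  split_ifs <;> first | omega | skip
  · rw [normSq_mul, normSq_mul, normSq_ofReal_sqrt (sub_nonneg.2 hlam), sub_zero]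
  · obtain rfl : j = q := Fin.ext (by omega)
    rw [normSq_mul, normSq_mul, normSq_mul, normSq_ofReal_sqrt (sub_nonneg.2 hlam), normSq_ofReal]
    ring

theorem normSq_apply_block_two (hlam : lam ^ 2 ≤ 1) (hmu : mu ^ 2 ≤ 1) (hp : (p : ℕ) = n - 2)
    (hq : (q : ℕ) = n - 1) (j : Fin n) :
    normSq (F z (finProdFinEquiv (2, j))) =
      (1 - lam ^ 2) * normSq (z p) * ((1 - mu ^ 2) * normSq (z q) * normSq (z j)) := by
  obtain ⟨hn, hF⟩ := hF
  have ep : (⟨n - 2, by omega⟩ : Fin n) = p := Fin.ext hp.symm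
  have eq : (⟨n - 1, by omega⟩ : Fin n) = q := Fin.ext hq.symm
  have hj := j.isLt
  have hj' : (j : ℕ) + n * 2 - 2 * n = j := by omega
  rw [hF]
  simp only [ep, eq, finProdFinEquiv_apply_val, Fin.val_two, hj', Fin.eta]
  split_ifs <;> first | omega | skip
  simp only [normSq_mul, normSq_ofReal_sqrt (sub_nonneg.2 hlam),
    normSq_ofReal_sqrt (sub_nonneg.2 hmu)]

theorem sum_normSq_sub_one (hlam : lam ^ 2 ≤ 1) (hmu : mu ^ 2 ≤ 1) (hp : (p : ℕ) = n - 2)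
    (hq : (q : ℕ) = n - 1) :
    ∑ i, normSq (F z i) - 1 = (∑ j, normSq (z j) - 1) *
      (1 + (1 - lam ^ 2) * normSq (z p) * (1 + (1 - mu ^ 2) * normSq (z q))) := by
  simp only [Fin.sum_univ_three_mul, hF.normSq_apply_block_zero z hp hq,
    hF.normSq_apply_block_one z hlam hp hq, hF.normSq_apply_block_two z hlam hmu hp hq,
    Finset.sum_sub_distrib, ← Finset.mul_sum, Finset.sum_ite_eq', Finset.mem_univ, if_true]
  ring

end IsExampleMap

/-- the norm identity for the map (1.1), and the consequence that it
restricts to a proper holomorphic map from `B^n` into `B^{3n}`. -/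
theorem example_map_norm_identity (n : ℕ) (hn : 2 ≤ n) (lam mu : ℝ)
    (hlam : lam ∈ Set.Ioo (0:ℝ) 1) (hmu : mu ∈ Set.Ioo (0:ℝ) 1)
    (F : (Fin n → ℂ) → Fin (3*n) → ℂ) (hF : IsExampleMap n lam mu F) :
    (∀ z : Fin n → ℂ, (∑ i, Complex.normSq (F z i)) - 1 =
      ((∑ j, Complex.normSq (z j)) - 1) *
        (1 + (1 - lam^2) * Complex.normSq (z ⟨n-2, by omega⟩) *
          (1 + (1 - mu^2) * Complex.normSq (z ⟨n-1, by omega⟩)))) ∧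
    (∀ z : Fin n → ℂ, ∑ j, Complex.normSq (z j) < 1 → ∑ i, Complex.normSq (F z i) < 1) ∧
    (∀ z : Fin n → ℂ, ∑ j, Complex.normSq (z j) = 1 → ∑ i, Complex.normSq (F z i) = 1) ∧
    Differentiable ℂ F ∧ Set.MapsTo F (ballC n) (ballC (3*n)) ∧
    (∀ K ⊆ ballC (3*n), IsCompact K → IsCompact (ballC n ∩ F ⁻¹' K)) := by
  have hlam2 : lam ^ 2 ≤ 1 := pow_le_one₀ hlam.1.le hlam.2.le
  have hmu2 : mu ^ 2 ≤ 1 := pow_le_one₀ hmu.1.le hmu.2.le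
  have identity z := hF.sum_normSq_sub_one z hlam2 hmu2
    (p := ⟨n - 2, by omega⟩) (q := ⟨n - 1, by omega⟩) rfl rfl
  have ball z (hz : ∑ j, normSq (z j) < 1) : ∑ i, normSq (F z i) < 1 := by
    have weight_pos : 0 < 1 + (1 - lam ^ 2) * normSq (z ⟨n - 2, by omega⟩) *
        (1 + (1 - mu ^ 2) * normSq (z ⟨n - 1, by omega⟩)) := by
      have := sub_nonneg.2 hlam2
      have := sub_nonneg.2 hmu2
      have := normSq_nonneg (z ⟨n - 2, by omega⟩)
      have := normSq_nonneg (z ⟨n - 1, by omega⟩)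
      positivity
    linarith [identity z, mul_neg_of_neg_of_pos (sub_neg.2 hz) weight_pos]
  have sphere z (hz : ∑ j, normSq (z j) = 1) : ∑ i, normSq (F z i) = 1 := by
    simpa only [hz, sub_self, zero_mul, sub_eq_zero] using identity z
  exact ⟨identity, ball, sphere, hF.differentiable, ball,
    fun K hKB hK => isCompact_ballC_inter_preimage hF.differentiable.continuous sphere hKB hK⟩
end
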